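/- Let a, b, c, d, e, q > 0, k ≥ 0, 0 < p < 1, 0 < m < 1, 0 < r ≤ 1 with r ≥ m, and let (u*, v*) with u* > 0, v* > 0 be a coexistence equilibrium of the harvesting model, i.e., a/(1+k·v*) − b·u* − c·u*^(p−1)·v*^m = 0 and −d − q·v*^(r−1) + e·u*^p·v*^(m−1) = 0. Assume b > c·(1−p)·u*^(p−2)·v*^m. Then the Jacobian J* of the harvesting model at (u*, v*) satisfies trace(J*) < 0 and det(J*) > 0, and consequently every complex root of z² − trace(J*)·z + det(J*) has strictly negative real part. -/
import Mathlib


lemma rh_quadratic (T D : ℝ) (hT : T < 0) (hD : 0 < D) (z : ℂ)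
    (hz : z ^ 2 - (T : ℂ) * z + (D : ℂ) = 0) : z.re < 0 := by
  have h1 := congrArg Complex.re hz
  have h2 := congrArg Complex.im hz
  simp [pow_two, Complex.mul_re, Complex.mul_im] at h1 h2
  set x := z.re; set y := z.im
  rcases eq_or_ne y 0 with hy | hy
  · rw [hy] at h1
    simp at h1
    nlinarith [sq_nonneg x, sq_nonneg (x - T)]
  · have h2x : 2 * x = T := by
      rcases mul_eq_zero.mp (show y * (2 * x - T) = 0 by linarith [h2]) with h | h
      · exact absurd h hy
      · linarith
    linarith

set_option maxHeartbeats 1000000 in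
/-- At a coexistence equilibrium `(u*, v*)` of the harvesting model,
with `r ≥ m` and `b > c·(1-p)·u*^(p-2)·v*^m`, the Jacobian `J*` satisfies
`trace J* < 0` and `det J* > 0`, so every complex root of
`z² - trace(J*)·z + det(J*)` has strictly negative real part (Routh–Hurwitz). -/
theorem harvesting_routh_hurwitz
    (a b c d e q k p m r ustar vstar : ℝ)
    (ha : 0 < a) (hb : 0 < b) (hc : 0 < c) (hd : 0 < d) (he : 0 < e) (hq : 0 < q)
    (hk : 0 ≤ k) (hp : 0 < p) (hp1 : p < 1) (hm : 0 < m) (hm1 : m < 1)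
    (hr : 0 < r) (hr1 : r ≤ 1) (hrm : m ≤ r)
    (hu : 0 < ustar) (hv : 0 < vstar)
    (heq1 : a / (1 + k * vstar) - b * ustar - c * ustar ^ (p - 1) * vstar ^ m = 0)
    (heq2 : -d - q * vstar ^ (r - 1) + e * ustar ^ p * vstar ^ (m - 1) = 0)
    (hbc : b > c * (1 - p) * ustar ^ (p - 2) * vstar ^ m)
    (J : Matrix (Fin 2) (Fin 2) ℝ)
    (hJ : J = !![a / (1 + k * vstar) - 2 * b * ustar - c * p * ustar ^ (p - 1) * vstar ^ m,
                 -(k * a * ustar) / (1 + k * vstar) ^ 2 - c * m * ustar ^ p * vstar ^ (m - 1);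
                 e * p * ustar ^ (p - 1) * vstar ^ m,
                 -d - q * r * vstar ^ (r - 1) + e * m * ustar ^ p * vstar ^ (m - 1)]) :
    J.trace < 0 ∧ 0 < J.det ∧
      ∀ z : ℂ, z ^ 2 - (J.trace : ℂ) * z + (J.det : ℂ) = 0 → z.re < 0 := by
  have hU1 : (0:ℝ) < ustar ^ (p - 1) := Real.rpow_pos_of_pos hu _
  have hU2 : (0:ℝ) < ustar ^ (p - 2) := Real.rpow_pos_of_pos hu _
  have hUp : (0:ℝ) < ustar ^ p := Real.rpow_pos_of_pos hu _
  have hVm : (0:ℝ) < vstar ^ m := Real.rpow_pos_of_pos hv _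
  have hVm1 : (0:ℝ) < vstar ^ (m - 1) := Real.rpow_pos_of_pos hv _
  have hVr1 : (0:ℝ) < vstar ^ (r - 1) := Real.rpow_pos_of_pos hv _
  have hsplit : ustar ^ (p - 1) = ustar ^ (p - 2) * ustar := by
    rw [show p - 1 = (p - 2) + 1 by ring, Real.rpow_add hu, Real.rpow_one]
  -- c11 < 0
  have hc11 : a / (1 + k * vstar) - 2 * b * ustar - c * p * ustar ^ (p - 1) * vstar ^ m < 0 := by
    have h1 : a / (1 + k * vstar) = b * ustar + c * ustar ^ (p - 1) * vstar ^ m := by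
      linarith
    rw [h1, hsplit]
    nlinarith [mul_pos hc hVm, mul_pos (mul_pos hc hVm) hU2]
  -- c22 < 0
  have hc22 : -d - q * r * vstar ^ (r - 1) + e * m * ustar ^ p * vstar ^ (m - 1) < 0 := by
    have h2 : e * ustar ^ p * vstar ^ (m - 1) = d + q * vstar ^ (r - 1) := by linarith
    have : e * m * ustar ^ p * vstar ^ (m - 1) = m * (d + q * vstar ^ (r - 1)) := by
      rw [← h2]; ring
    rw [this]
    nlinarith [mul_pos hq hVr1]
  -- c12 < 0, c21 > 0
  have hkv : (0:ℝ) < 1 + k * vstar := by nlinarith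
  have hc12 : -(k * a * ustar) / (1 + k * vstar) ^ 2 - c * m * ustar ^ p * vstar ^ (m - 1) < 0 := by
    have h1 : -(k * a * ustar) / (1 + k * vstar) ^ 2 ≤ 0 := by
      apply div_nonpos_of_nonpos_of_nonneg
      · nlinarith [mul_nonneg hk (mul_nonneg ha.le hu.le)]
      · positivity
    nlinarith [mul_pos (mul_pos (mul_pos hc hm) hUp) hVm1]
  have hc21 : 0 < e * p * ustar ^ (p - 1) * vstar ^ m := by positivity
  set A := a / (1 + k * vstar) - 2 * b * ustar - c * p * ustar ^ (p - 1) * vstar ^ m with hA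
  set B := -(k * a * ustar) / (1 + k * vstar) ^ 2 - c * m * ustar ^ p * vstar ^ (m - 1) with hB
  set C := e * p * ustar ^ (p - 1) * vstar ^ m with hCdef
  set E := -d - q * r * vstar ^ (r - 1) + e * m * ustar ^ p * vstar ^ (m - 1) with hE
  have htr : J.trace = A + E := by rw [hJ, Matrix.trace_fin_two_of]
  have hdet : J.det = A * E - B * C := by rw [hJ, Matrix.det_fin_two_of]
  have hT : J.trace < 0 := by rw [htr]; linarith
  have hD : 0 < J.det := by
    rw [hdet]
    nlinarith [mul_pos (neg_pos.mpr hc11) (neg_pos.mpr hc22), mul_pos (neg_pos.mpr hc12) hc21]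
  exact ⟨hT, hD, fun z hz => rh_quadratic _ _ hT hD z hz⟩
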